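/- Equivalence of the two LODF formulas: for a connected graph that remains connected after removing edge (r,s), the flow change on edge (m,n) given by b_{mn} ν_mn^T (B + ΔB)^† ν_rs F_rs, with ΔB = -b_rs ν_rs ν_rs^T the Laplacian perturbation removing edge (r,s), equals b_{mn} ν_mn^T B^† ν_rs F_rs / (1 - b_rs ν_rs^T B^† ν_rs). -/

import Mathlib

/-!
Removing the edge `(r,s)` is the rank-one perturbation `B̂ = B - b_rs ν νᵀ` of the Laplacian
(`ν = ν_rs`). As the graph is connected, `ker B` consists of the constants, to which `ν` is
orthogonal; so `ν` lies in the range of `B`, and the Sherman–Morrison formula survives for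
pseudoinverses: `B̂† = B† + b_rs / (1 - η) · B†ν (B†ν)ᵀ` with `η = b_rs νᵀ B† ν`, whence
`B̂† ν = B† ν / (1 - η)`. The denominator does not vanish: `B̂ B†ν = (1 - η) ν`, so `η = 1` would
put `B†ν` in `ker B̂`, i.e. make it constant because the reduced graph is still connected, and then
`η = b_rs νᵀ B† ν = 0`.
-/

open Matrix BigOperators

/-- The weighted Laplacian of a weight function `w` on `Fin N`. -/
def lapMat {N : ℕ} (w : Fin N → Fin N → ℝ) : Matrix (Fin N) (Fin N) ℝ :=
  fun i j => if i = j then ∑ k, w i k else - w i j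

/-- Symmetric, nonnegative weights with zero diagonal. -/
def IsWeight {N : ℕ} (w : Fin N → Fin N → ℝ) : Prop :=
  (∀ i j, w i j = w j i) ∧ (∀ i j, 0 ≤ w i j) ∧ (∀ i, w i i = 0)

/-- The simple graph whose edges are the pairs with nonzero weight. -/
def wGraph {N : ℕ} (w : Fin N → Fin N → ℝ) : SimpleGraph (Fin N) where
  Adj i j := i ≠ j ∧ (w i j ≠ 0 ∨ w j i ≠ 0)
  symm := ⟨fun i j ⟨h1, h2⟩ => ⟨h1.symm, h2.symm⟩⟩
  loopless := ⟨fun i h => h.1 rfl⟩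

/-- The dipole vector `ν_rs`: `+1` at `r`, `-1` at `s`, `0` elsewhere. -/
def dipole {N : ℕ} (r s : Fin N) : Fin N → ℝ :=
  fun i => (if i = r then (1:ℝ) else 0) - (if i = s then (1:ℝ) else 0)

/-- `Bd` is the Moore-Penrose pseudoinverse of `B` (the four Penrose axioms). -/
def IsMoorePenrose {N : ℕ} (B Bd : Matrix (Fin N) (Fin N) ℝ) : Prop :=
  B * Bd * B = B ∧ Bd * B * Bd = Bd ∧ (B * Bd)ᵀ = B * Bd ∧ (Bd * B)ᵀ = Bd * B

/-- The locality factor `η(r,s) = b_rs ν_rs^T B^† ν_rs`. -/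
def eta {N : ℕ} (w : Fin N → Fin N → ℝ) (Bdag : Matrix (Fin N) (Fin N) ℝ)
    (r s : Fin N) : ℝ :=
  w r s * (dipole r s ⬝ᵥ Bdag.mulVec (dipole r s))

/-- The weights after removal of the edge `(r,s)`. -/
def removeEdge {N : ℕ} (w : Fin N → Fin N → ℝ) (r s : Fin N) :
    Fin N → Fin N → ℝ :=
  fun i j => if (i = r ∧ j = s) ∨ (i = s ∧ j = r) then 0 else w i j

namespace IsMoorePenrose

variable {N : ℕ} {A Ad : Matrix (Fin N) (Fin N) ℝ}

theorem unique {Ad' : Matrix (Fin N) (Fin N) ℝ} (h : IsMoorePenrose A Ad)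
    (h' : IsMoorePenrose A Ad') : Ad = Ad' := by
  obtain ⟨h₁, h₂, h₃, h₄⟩ := h
  obtain ⟨h₁', h₂', h₃', h₄'⟩ := h'
  have hAAd : A * Ad = A * Ad' :=
    calc A * Ad = (A * Ad' * (A * Ad))ᵀ := by rw [← Matrix.mul_assoc, h₁', h₃]
      _ = A * Ad * (A * Ad') := by rw [transpose_mul, h₃, h₃']
      _ = A * Ad' := by rw [← Matrix.mul_assoc, h₁]
  have hAdA : Ad * A = Ad' * A :=
    calc Ad * A = (Ad * A * (Ad' * A))ᵀ := by
          rw [show Ad * A * (Ad' * A) = Ad * (A * Ad' * A) by noncomm_ring, h₁', h₄]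
      _ = Ad' * A * (Ad * A) := by rw [transpose_mul, h₄, h₄']
      _ = Ad' * A := by rw [show Ad' * A * (Ad * A) = Ad' * (A * Ad * A) by noncomm_ring, h₁]
  calc Ad = Ad * A * Ad := h₂.symm
    _ = Ad' * (A * Ad') := by rw [hAdA, Matrix.mul_assoc, hAAd]
    _ = Ad' := by rw [← Matrix.mul_assoc, h₂']

theorem transpose_eq (hA : Aᵀ = A) (h : IsMoorePenrose A Ad) : Adᵀ = Ad := by
  obtain ⟨h₁, h₂, h₃, h₄⟩ := h
  refine (unique ⟨h₁, h₂, h₃, h₄⟩ ⟨?_, ?_, ?_, ?_⟩).symm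
  · simpa [transpose_mul, hA, Matrix.mul_assoc] using congrArg transpose h₁
  · simpa [transpose_mul, hA, Matrix.mul_assoc] using congrArg transpose h₂
  · rw [transpose_mul, transpose_transpose, hA, ← h₄, transpose_mul, hA]
  · rw [transpose_mul, transpose_transpose, hA, ← h₃, transpose_mul, hA]

theorem mul_comm (hA : Aᵀ = A) (h : IsMoorePenrose A Ad) : A * Ad = Ad * A := by
  rw [← h.2.2.2, transpose_mul, h.transpose_eq hA, hA]

theorem mulVec_eq_self (h : IsMoorePenrose A Ad) {v : Fin N → ℝ}
    (hv : ∀ x, A *ᵥ x = 0 → v ⬝ᵥ x = 0) : (Ad * A) *ᵥ v = v := by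
  set u := v - (Ad * A) *ᵥ v with hu
  have hAu : A *ᵥ u = 0 := by
    rw [hu, mulVec_sub, mulVec_mulVec, ← Matrix.mul_assoc, h.1, sub_self]
  have hAdAu : (Ad * A) *ᵥ u = 0 := by rw [← mulVec_mulVec, hAu, mulVec_zero]
  have huu : u ⬝ᵥ u = 0 :=
    calc u ⬝ᵥ u = v ⬝ᵥ u - u ⬝ᵥ ((Ad * A) *ᵥ v) := by rw [hu, sub_dotProduct, dotProduct_comm u]
      _ = 0 := by rw [dotProduct_mulVec, ← mulVec_transpose, h.2.2.2, hAdAu, hv u hAu,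
          zero_dotProduct, sub_zero]
  exact (sub_eq_zero.mp (dotProduct_self_eq_zero.mp huu)).symm

theorem mulVec_mulVec_eq_self (hA : Aᵀ = A) (h : IsMoorePenrose A Ad) {ν : Fin N → ℝ}
    (hν : (Ad * A) *ᵥ ν = ν) : A *ᵥ (Ad *ᵥ ν) = ν := by
  rw [mulVec_mulVec, h.mul_comm hA, hν]

theorem sub_smul_vecMulVec_mulVec (hA : Aᵀ = A) (h : IsMoorePenrose A Ad) {ν : Fin N → ℝ}
    (hν : (Ad * A) *ᵥ ν = ν) (b : ℝ) :
    (A - b • vecMulVec ν ν) *ᵥ (Ad *ᵥ ν) = (1 - b * (ν ⬝ᵥ Ad *ᵥ ν)) • ν := by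
  rw [sub_mulVec, smul_mulVec, vecMulVec_mulVec, op_smul_eq_smul, h.mulVec_mulVec_eq_self hA hν,
    smul_smul, sub_smul, one_smul]

/-- The Sherman–Morrison formula for the pseudoinverse; `hν` puts `ν` in the range of `A`. -/
theorem sub_smul_vecMulVec (hA : Aᵀ = A) (h : IsMoorePenrose A Ad) {ν : Fin N → ℝ}
    (hν : (Ad * A) *ᵥ ν = ν) {b : ℝ} (hden : 1 - b * (ν ⬝ᵥ Ad *ᵥ ν) ≠ 0) :
    IsMoorePenrose (A - b • vecMulVec ν ν)
      (Ad + (b / (1 - b * (ν ⬝ᵥ Ad *ᵥ ν))) • vecMulVec (Ad *ᵥ ν) (Ad *ᵥ ν)) := by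
  set u := Ad *ᵥ ν with hu
  set a := ν ⬝ᵥ u
  set κ := b / (1 - b * a) with hκ
  set Â := A - b • vecMulVec ν ν
  set C := Ad + κ • vecMulVec u u
  have hAd : Adᵀ = Ad := h.transpose_eq hA
  have hAu : A *ᵥ u = ν := h.mulVec_mulVec_eq_self hA hν
  have hνAd : ν ᵥ* Ad = u := by rw [← mulVec_transpose, hAd]
  have hPν : (A * Ad) *ᵥ ν = ν := by rw [h.mul_comm hA, hν]
  have hPu : (A * Ad) *ᵥ u = u := by rw [hu, mulVec_mulVec, h.mul_comm hA, h.2.1]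
  have hÂC : Â * C = A * Ad :=
    calc Â * C = A * Ad + (κ - b - b * κ * a) • vecMulVec ν u := by
          simp only [Â, C, Matrix.sub_mul, Matrix.mul_add, Matrix.smul_mul, Matrix.mul_smul,
            mul_vecMulVec, vecMulVec_mul, sub_mulVec, smul_mulVec, vecMulVec_mulVec,
            op_smul_eq_smul, hAu, hνAd, sub_vecMulVec, smul_vecMulVec]
          module
      _ = A * Ad := by
          rw [show κ - b - b * κ * a = 0 by rw [hκ]; field_simp; ring, zero_smul, add_zero]
  have hCÂ : C * Â = A * Ad := by
    have hÂ : Âᵀ = Â := by simp [Â, hA]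
    have hC : Cᵀ = C := by simp [C, hAd]
    rw [← h.2.2.1, ← hÂC, transpose_mul, hÂ, hC]
  refine ⟨?_, ?_, ?_, ?_⟩
  · rw [hÂC, Matrix.mul_sub, Matrix.mul_smul, h.1, mul_vecMulVec, hPν]
  · rw [Matrix.mul_assoc, ← Matrix.mul_assoc C, hCÂ, Matrix.mul_add, Matrix.mul_smul,
      h.mul_comm hA, h.2.1, mul_vecMulVec, ← h.mul_comm hA, hPu]
  · rw [hÂC, h.2.2.1]
  · rw [hCÂ, h.2.2.1]

end IsMoorePenrose

theorem add_div_smul_vecMulVec_mulVec {N : ℕ} (Ad : Matrix (Fin N) (Fin N) ℝ) (ν : Fin N → ℝ)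
    {b : ℝ} (hden : 1 - b * (ν ⬝ᵥ Ad *ᵥ ν) ≠ 0) :
    (Ad + (b / (1 - b * (ν ⬝ᵥ Ad *ᵥ ν))) • vecMulVec (Ad *ᵥ ν) (Ad *ᵥ ν)) *ᵥ ν =
      (1 - b * (ν ⬝ᵥ Ad *ᵥ ν))⁻¹ • Ad *ᵥ ν := by
  rw [add_mulVec, smul_mulVec, vecMulVec_mulVec, op_smul_eq_smul, smul_smul,
    dotProduct_comm (Ad *ᵥ ν) ν]
  match_scalars
  field_simp
  ring

section Laplacian

variable {N : ℕ} {w : Fin N → Fin N → ℝ}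

theorem lapMat_transpose (hsymm : ∀ i j, w i j = w j i) : (lapMat w)ᵀ = lapMat w := by
  ext i j
  by_cases hij : i = j
  · subst hij; rfl
  · simp [lapMat, hij, Ne.symm hij, hsymm i j]

theorem lapMat_mulVec_apply (hdiag : ∀ i, w i i = 0) (x : Fin N → ℝ) (i : Fin N) :
    (lapMat w *ᵥ x) i = ∑ j, w i j * (x i - x j) := by
  have hentry : ∀ j, lapMat w i j = (if i = j then ∑ k, w i k else 0) - w i j := by
    intro j
    by_cases hij : i = j
    · subst hij; simp [lapMat, hdiag]
    · simp [lapMat, hij]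
  simp only [mulVec, dotProduct, hentry, sub_mul, ite_mul, zero_mul, Finset.sum_sub_distrib,
    Finset.sum_ite_eq, Finset.mem_univ, if_true, Finset.sum_mul, mul_sub]

theorem two_mul_dotProduct_lapMat_mulVec (hsymm : ∀ i j, w i j = w j i)
    (hdiag : ∀ i, w i i = 0) (x : Fin N → ℝ) :
    2 * (x ⬝ᵥ lapMat w *ᵥ x) = ∑ i, ∑ j, w i j * (x i - x j) ^ 2 := by
  have hx : x ⬝ᵥ lapMat w *ᵥ x = ∑ i, ∑ j, w i j * (x i * (x i - x j)) := by
    simp only [dotProduct, lapMat_mulVec_apply hdiag, Finset.mul_sum]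
    exact Finset.sum_congr rfl fun i _ => Finset.sum_congr rfl fun j _ => by ring
  have hx' : x ⬝ᵥ lapMat w *ᵥ x = ∑ i, ∑ j, w i j * (x j * (x j - x i)) := by
    rw [hx, Finset.sum_comm]
    simp only [hsymm]
  calc 2 * (x ⬝ᵥ lapMat w *ᵥ x)
      = ∑ i, ∑ j, (w i j * (x i * (x i - x j)) + w i j * (x j * (x j - x i))) := by
        rw [two_mul]
        nth_rw 2 [hx']
        simp only [hx, Finset.sum_add_distrib]
    _ = ∑ i, ∑ j, w i j * (x i - x j) ^ 2 :=
        Finset.sum_congr rfl fun i _ => Finset.sum_congr rfl fun j _ => by ring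

theorem eq_of_lapMat_mulVec_eq_zero (hw : IsWeight w) (hconn : (wGraph w).Preconnected)
    {x : Fin N → ℝ} (hx : lapMat w *ᵥ x = 0) (i j : Fin N) : x i = x j := by
  obtain ⟨hsymm, hnonneg, hdiag⟩ := hw
  have hterm_nonneg : ∀ i j, 0 ≤ w i j * (x i - x j) ^ 2 := fun i j =>
    mul_nonneg (hnonneg i j) (sq_nonneg _)
  have hsum : ∑ i, ∑ j, w i j * (x i - x j) ^ 2 = 0 := by
    rw [← two_mul_dotProduct_lapMat_mulVec hsymm hdiag, hx, dotProduct_zero, mul_zero]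
  have hterm : ∀ i j, w i j * (x i - x j) ^ 2 = 0 := by
    simpa [Finset.sum_eq_zero_iff_of_nonneg, hterm_nonneg, Finset.sum_nonneg] using hsum
  have hadj : ∀ i j, (wGraph w).Adj i j → x i = x j := by
    rintro i j ⟨-, hij⟩
    have hwij : w i j ≠ 0 := hij.elim id (hsymm i j ▸ ·)
    exact sub_eq_zero.mp (pow_eq_zero_iff two_ne_zero |>.mp
      ((mul_eq_zero.mp (hterm i j)).resolve_left hwij))
  obtain ⟨p⟩ := hconn i j
  induction p with
  | nil => rfl
  | cons hAdj _ ih => exact (hadj _ _ hAdj).trans ih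

theorem dotProduct_eq_zero_of_lapMat_mulVec_eq_zero (hw : IsWeight w)
    (hconn : (wGraph w).Connected) {v x : Fin N → ℝ} (hv : ∑ i, v i = 0)
    (hx : lapMat w *ᵥ x = 0) : v ⬝ᵥ x = 0 := by
  obtain ⟨i₀⟩ := hconn.nonempty
  calc v ⬝ᵥ x = ∑ i, v i * x i₀ := by
        simp only [dotProduct, eq_of_lapMat_mulVec_eq_zero hw hconn.preconnected hx _ i₀]
    _ = 0 := by rw [← Finset.sum_mul, hv, zero_mul]

theorem one_sub_mul_dotProduct_ne_zero (hw : IsWeight w) (hconn : (wGraph w).Connected)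
    {ν u : Fin N → ℝ} (hν : ∑ i, ν i = 0) {c : ℝ}
    (h : lapMat w *ᵥ u = (1 - c * (ν ⬝ᵥ u)) • ν) : 1 - c * (ν ⬝ᵥ u) ≠ 0 := by
  intro hzero
  rw [hzero, zero_smul] at h
  rw [dotProduct_eq_zero_of_lapMat_mulVec_eq_zero hw hconn hν h, mul_zero, sub_zero] at hzero
  exact one_ne_zero hzero

end Laplacian

section RemoveEdge

variable {N : ℕ} {w : Fin N → Fin N → ℝ}

theorem sum_dipole (r s : Fin N) : ∑ i, dipole r s i = 0 := by
  simp [dipole, Finset.sum_sub_distrib]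

theorem removeEdge_isWeight (hw : IsWeight w) (r s : Fin N) :
    IsWeight (removeEdge w r s) := by
  obtain ⟨hsymm, hnonneg, hdiag⟩ := hw
  refine ⟨fun i j => ?_, fun i j => ?_, fun i => ?_⟩ <;> unfold removeEdge
  · simp only [hsymm i j, and_comm, or_comm]
  · split_ifs
    exacts [le_rfl, hnonneg i j]
  · split_ifs
    exacts [rfl, hdiag i]

theorem removeEdge_self (hdiag : ∀ i, w i i = 0) (r : Fin N) :
    removeEdge w r r = w := by
  ext i j
  simp only [removeEdge, or_self]
  split_ifs with h
  · rw [h.1, h.2, hdiag]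
  · rfl

theorem sum_removeEdge {r s : Fin N} (hrs : r ≠ s) (i : Fin N) :
    ∑ k, removeEdge w r s i k =
      ∑ k, w i k - (if i = r then w r s else 0) - (if i = s then w s r else 0) := by
  have h : ∀ k, removeEdge w r s i k = w i k - (if i = r ∧ k = s then w r s else 0)
      - (if i = s ∧ k = r then w s r else 0) := by
    intro k
    unfold removeEdge
    by_cases h1 : i = r <;> by_cases h2 : k = s <;> by_cases h3 : i = s <;> by_cases h4 : k = r <;>
      simp_all
  simp only [h, Finset.sum_sub_distrib, ite_and, Finset.sum_ite_irrel, Finset.sum_ite_eq',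
    Finset.mem_univ, if_true, Finset.sum_const_zero]

theorem lapMat_removeEdge (hsymm : ∀ i j, w i j = w j i)
    (hdiag : ∀ i, w i i = 0) (r s : Fin N) :
    lapMat (removeEdge w r s) = lapMat w - w r s • vecMulVec (dipole r s) (dipole r s) := by
  obtain rfl | hrs := eq_or_ne r s
  · have : dipole r r = 0 := by ext i; simp [dipole]
    simp [removeEdge_self hdiag, this]
  ext i j
  simp only [lapMat, sum_removeEdge hrs, Matrix.sub_apply, Matrix.smul_apply, vecMulVec_apply,
    dipole, smul_eq_mul]
  by_cases hij : i = j <;> by_cases h1 : i = r <;> by_cases h2 : j = s <;> by_cases h3 : i = s <;>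
    by_cases h4 : j = r <;> simp_all [removeEdge, hsymm s r]

end RemoveEdge

theorem lodf_formulas_equivalent_general {N : ℕ} (w : Fin N → Fin N → ℝ)
    (hw : IsWeight w) (hconn : (wGraph w).Connected)
    (r s m n : Fin N)
    (hconn' : (wGraph (removeEdge w r s)).Connected)
    (Bdag Bhatdag : Matrix (Fin N) (Fin N) ℝ)
    (hB : IsMoorePenrose (lapMat w) Bdag)
    (hBhat : IsMoorePenrose (lapMat (removeEdge w r s)) Bhatdag)
    (Frs : ℝ) :
    w m n * (dipole m n ⬝ᵥ Bhatdag.mulVec (dipole r s)) * Frs =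
      w m n * (dipole m n ⬝ᵥ Bdag.mulVec (dipole r s)) * Frs /
        (1 - w r s * (dipole r s ⬝ᵥ Bdag.mulVec (dipole r s))) := by
  have hA : (lapMat w)ᵀ = lapMat w := lapMat_transpose hw.1
  have hν : (Bdag * lapMat w) *ᵥ dipole r s = dipole r s := hB.mulVec_eq_self fun _ hx =>
    dotProduct_eq_zero_of_lapMat_mulVec_eq_zero hw hconn (sum_dipole r s) hx
  rw [lapMat_removeEdge hw.1 hw.2.2 r s] at hBhat
  have hden : 1 - w r s * (dipole r s ⬝ᵥ Bdag *ᵥ dipole r s) ≠ 0 := by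
    refine one_sub_mul_dotProduct_ne_zero (removeEdge_isWeight hw r s) hconn' (sum_dipole r s) ?_
    rw [lapMat_removeEdge hw.1 hw.2.2 r s]
    exact hB.sub_smul_vecMulVec_mulVec hA hν _
  rw [hBhat.unique (hB.sub_smul_vecMulVec hA hν hden), add_div_smul_vecMulVec_mulVec _ _ hden,
    dotProduct_smul, smul_eq_mul]
  field_simp

theorem lodf_formulas_equivalent {N : ℕ} (w : Fin N → Fin N → ℝ)
    (hw : IsWeight w) (hconn : (wGraph w).Connected)
    (r s m n : Fin N) (hedge : 0 < w r s)
    (hconn' : (wGraph (removeEdge w r s)).Connected)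
    (Bdag Bhatdag : Matrix (Fin N) (Fin N) ℝ)
    (hB : IsMoorePenrose (lapMat w) Bdag)
    (hBhat : IsMoorePenrose (lapMat (removeEdge w r s)) Bhatdag)
    (Frs : ℝ) :
    w m n * (dipole m n ⬝ᵥ Bhatdag.mulVec (dipole r s)) * Frs =
      w m n * (dipole m n ⬝ᵥ Bdag.mulVec (dipole r s)) * Frs /
        (1 - w r s * (dipole r s ⬝ᵥ Bdag.mulVec (dipole r s))) :=
  lodf_formulas_equivalent_general w hw hconn r s m n hconn' Bdag Bhatdag hB hBhat Frs
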